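/- Let L ≥ 1 be an integer, 0 ≤ p ≤ q ≤ 1 reals, and suppose b_norm := ∑_{M ∈ {0,…,L}, M < Lq} 𝔟_{L,p}(M) > 0. Define r : {0,…,L} → ℝ by r(M) = 𝔟_{L,q}(M)/b_norm for M < Lq and r(M) = (𝔟_{L,q}(M) − 𝔟_{L,p}(M))/b_norm for M ≥ Lq, and define the stochastic map S on pmfs over {0,…,L} by S(P)(M') = ∑_M Pr(M'|M)·P(M), where Pr(M'|M) = r(M') if M < Lq and Pr(M'|M) = δ_{M'M} if M ≥ Lq. Then r is a pmf on {0,…,L} (in particular r(M) ≥ 0 for all M), S maps pmfs to pmfs, and S(𝔟_{L,p}) = 𝔟_{L,q}. -/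

import Mathlib

/-!
Above the threshold `L q`, the binomial weight `x ↦ x ^ M (1 - x) ^ (L - M)` is increasing on
`[0, q]`, since its derivative has the sign of `M - L x`; hence `𝔟_{L,q} - 𝔟_{L,p} ≥ 0` there and
`r` is a pmf, its total mass being `(1 - (1 - b_norm)) / b_norm`. The map `S` sends `P` to
`(∑_{M < L q} P M) • r` plus the part of `P` on `M ≥ L q`, which for `P = 𝔟_{L,p}` is
`b_norm • r + 𝔟_{L,p} = 𝔟_{L,q}` above the threshold and `b_norm • r = 𝔟_{L,q}` below it.
-/

open Finset

noncomputable def binomPmf (L : ℕ) (p : ℝ) (M : ℕ) : ℝ :=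
  (Nat.choose L M : ℝ) * p ^ M * (1 - p) ^ (L - M)

def IsPmfOn {ι : Type*} (s : Finset ι) (P : ι → ℝ) : Prop :=
  (∀ i ∈ s, 0 ≤ P i) ∧ ∑ i ∈ s, P i = 1

theorem hasDerivAt_pow_mul_one_sub_pow (M K : ℕ) (x : ℝ) :
    HasDerivAt (fun y : ℝ => y ^ M * (1 - y) ^ K)
      (M * x ^ (M - 1) * (1 - x) ^ K - x ^ M * (K * (1 - x) ^ (K - 1))) x := by
  have h : HasDerivAt (fun y : ℝ => y ^ M * (1 - y) ^ K) _ x :=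
    (hasDerivAt_pow M x).mul (((hasDerivAt_id x).const_sub 1).pow K)
  convert h using 1
  simp only [id]
  ring

theorem pow_mul_one_sub_pow_le_of_le {M K : ℕ} {p q : ℝ} (hp : 0 ≤ p) (hpq : p ≤ q)
    (hq1 : q ≤ 1) (hq : (M + K) * q ≤ M) :
    p ^ M * (1 - p) ^ K ≤ q ^ M * (1 - q) ^ K := by
  refine monotoneOn_of_deriv_nonneg (convex_Icc 0 q) (by fun_prop)
    (fun x _ => (hasDerivAt_pow_mul_one_sub_pow M K x).differentiableAt.differentiableWithinAt)
    ?_ ⟨hp, hpq⟩ ⟨hp.trans hpq, le_rfl⟩ hpq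
  intro x hx
  rw [interior_Icc] at hx
  obtain ⟨hx0, hxq⟩ := hx
  have hx1 : 0 < 1 - x := by linarith
  rw [(hasDerivAt_pow_mul_one_sub_pow M K x).deriv]
  -- multiplying by `x (1 - x) > 0` clears the exponents `M - 1` and `K - 1`
  have hx_pow : x * (M * x ^ (M - 1)) = M * x ^ M := by
    cases M with
    | zero => simp
    | succ n => rw [Nat.add_sub_cancel, pow_succ]; ring
  have hy_pow : (1 - x) * (K * (1 - x) ^ (K - 1)) = K * (1 - x) ^ K := by
    cases K with
    | zero => simp
    | succ n => rw [Nat.add_sub_cancel, pow_succ]; ring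
  have key : x * (1 - x) * (M * x ^ (M - 1) * (1 - x) ^ K - x ^ M * (K * (1 - x) ^ (K - 1)))
      = x ^ M * (1 - x) ^ K * (M - (M + K) * x) := by
    linear_combination (1 - x) ^ (K + 1) * hx_pow - x ^ (M + 1) * hy_pow
  have hslope : 0 ≤ (M - (M + K) * x : ℝ) :=
    sub_nonneg.2 ((mul_le_mul_of_nonneg_left hxq.le (by positivity)).trans hq)
  have hprod :
      0 ≤ x * (1 - x) * (M * x ^ (M - 1) * (1 - x) ^ K - x ^ M * (K * (1 - x) ^ (K - 1))) := by
    rw [key]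
    positivity
  exact nonneg_of_mul_nonneg_right hprod (by positivity)

theorem binomPmf_nonneg {L : ℕ} {x : ℝ} (h0 : 0 ≤ x) (h1 : x ≤ 1) (M : ℕ) :
    0 ≤ binomPmf L x M := by
  have : 0 ≤ 1 - x := sub_nonneg.2 h1
  unfold binomPmf
  positivity

theorem sum_binomPmf (L : ℕ) (x : ℝ) : ∑ M ∈ range (L + 1), binomPmf L x M = 1 := by
  have h := add_pow x (1 - x) L
  rw [add_sub_cancel, one_pow] at h
  rw [h]
  exact sum_congr rfl fun M _ => by unfold binomPmf; ring

theorem isPmfOn_binomPmf {L : ℕ} {x : ℝ} (h0 : 0 ≤ x) (h1 : x ≤ 1) :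
    IsPmfOn (range (L + 1)) (binomPmf L x) :=
  ⟨fun M _ => binomPmf_nonneg h0 h1 M, sum_binomPmf L x⟩

theorem binomPmf_le_binomPmf {L M : ℕ} {p q : ℝ} (hML : M ≤ L) (hp : 0 ≤ p) (hpq : p ≤ q)
    (hq1 : q ≤ 1) (hLq : L * q ≤ M) : binomPmf L p M ≤ binomPmf L q M := by
  have hq : ((M + (L - M) : ℕ) : ℝ) * q ≤ M := by rwa [Nat.add_sub_cancel' hML]
  push_cast at hq
  unfold binomPmf
  rw [mul_assoc, mul_assoc]
  exact mul_le_mul_of_nonneg_left (pow_mul_one_sub_pow_le_of_le hp hpq hq1 hq) (Nat.cast_nonneg _)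

section TransferMap

variable {ι : Type*} {s : Finset ι} {A : ι → Prop} [DecidablePred A] {b₀ b₁ r : ι → ℝ} {β : ℝ}

theorem weight_mul_eq (hβ : β ≠ 0)
    (hr : ∀ i, r i = if A i then b₁ i / β else (b₁ i - b₀ i) / β) (i : ι) :
    r i * β = b₁ i - if A i then 0 else b₀ i := by
  rw [hr]
  split_ifs
  · rw [div_mul_cancel₀ _ hβ, sub_zero]
  · rw [div_mul_cancel₀ _ hβ]

theorem isPmfOn_weight (hb₀ : ∑ i ∈ s, b₀ i = 1) (hb₁ : IsPmfOn s b₁)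
    (hle : ∀ i ∈ s, ¬ A i → b₀ i ≤ b₁ i) (hβ : β = ∑ i ∈ s with A i, b₀ i) (hβpos : 0 < β)
    (hr : ∀ i, r i = if A i then b₁ i / β else (b₁ i - b₀ i) / β) :
    IsPmfOn s r := by
  refine ⟨fun i hi => ?_, ?_⟩
  · rw [hr]
    split_ifs with hA
    · exact div_nonneg (hb₁.1 i hi) hβpos.le
    · exact div_nonneg (sub_nonneg.2 (hle i hi hA)) hβpos.le
  · have hrest : ∑ i ∈ s, (if A i then 0 else b₀ i) = 1 - β := by
      rw [sum_ite, sum_const_zero, zero_add, hβ, ← hb₀, ← sum_filter_add_sum_filter_not s A]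
      ring
    have hmass : (∑ i ∈ s, r i) * β = 1 * β := by
      rw [sum_mul, sum_congr rfl fun i _ => weight_mul_eq hβpos.ne' hr i, sum_sub_distrib,
        hb₁.2, hrest]
      ring
    exact mul_right_cancel₀ hβpos.ne' hmass

variable [DecidableEq ι] {S : (ι → ℝ) → ι → ℝ}

theorem transfer_apply
    (hS : ∀ P j, S P j = ∑ i ∈ s, (if A i then r j else if j = i then 1 else 0) * P i)
    (P : ι → ℝ) {j : ι} (hj : j ∈ s) :
    S P j = r j * ∑ i ∈ s with A i, P i + if A j then 0 else P j := by
  have hsplit : ∀ i, (if A i then r j else if j = i then 1 else 0) * P i =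
      (if A i then r j * P i else 0) + if j = i then (if A i then 0 else P i) else 0 := by
    intro i
    split_ifs <;> simp_all
  rw [hS, sum_congr rfl fun i _ => hsplit i, sum_add_distrib, ← sum_filter, ← mul_sum,
    sum_ite_eq, if_pos hj]

theorem isPmfOn_transfer (hr : IsPmfOn s r)
    (hS : ∀ P j, S P j = ∑ i ∈ s, (if A i then r j else if j = i then 1 else 0) * P i)
    {P : ι → ℝ} (hP : IsPmfOn s P) : IsPmfOn s (S P) := by
  have hmass : 0 ≤ ∑ i ∈ s with A i, P i := sum_nonneg fun i hi => hP.1 i (mem_filter.1 hi).1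
  refine ⟨fun j hj => ?_, ?_⟩
  · rw [transfer_apply hS P hj]
    have hstay : 0 ≤ if A j then 0 else P j := by split_ifs; exacts [le_rfl, hP.1 j hj]
    exact add_nonneg (mul_nonneg (hr.1 j hj) hmass) hstay
  · rw [sum_congr rfl fun j hj => transfer_apply hS P hj, sum_add_distrib, ← sum_mul, hr.2,
      one_mul, sum_ite, sum_const_zero, zero_add, sum_filter_add_sum_filter_not, hP.2]

theorem transfer_eq (hβ : β = ∑ i ∈ s with A i, b₀ i) (hβ0 : β ≠ 0)
    (hr : ∀ i, r i = if A i then b₁ i / β else (b₁ i - b₀ i) / β)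
    (hS : ∀ P j, S P j = ∑ i ∈ s, (if A i then r j else if j = i then 1 else 0) * P i)
    {j : ι} (hj : j ∈ s) : S b₀ j = b₁ j := by
  rw [transfer_apply hS b₀ hj, ← hβ, weight_mul_eq hβ0 hr]
  ring

end TransferMap

theorem stmt_5_general (L : ℕ) (p q : ℝ)
    (hp0 : 0 ≤ p) (hpq : p ≤ q) (hq1 : q ≤ 1)
    (bnorm : ℝ)
    (hbnorm : bnorm = ∑ M ∈ (Finset.range (L + 1)).filter (fun M : ℕ => (M : ℝ) < (L : ℝ) * q),
      binomPmf L p M)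
    (hbpos : 0 < bnorm)
    (r : ℕ → ℝ)
    (hr : ∀ M, r M = if (M : ℝ) < (L : ℝ) * q then binomPmf L q M / bnorm
      else (binomPmf L q M - binomPmf L p M) / bnorm)
    (S : (ℕ → ℝ) → (ℕ → ℝ))
    (hS : ∀ P M', S P M' = ∑ M ∈ Finset.range (L + 1),
      (if (M : ℝ) < (L : ℝ) * q then r M' else if M' = M then 1 else 0) * P M) :
    -- `r` is a pmf on `{0,…,L}` (in particular `r M ≥ 0`)
    ((∀ M ∈ Finset.range (L + 1), 0 ≤ r M) ∧ ∑ M ∈ Finset.range (L + 1), r M = 1) ∧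
    -- `S` maps pmfs on `{0,…,L}` to pmfs on `{0,…,L}`
    (∀ P : ℕ → ℝ, (∀ M ∈ Finset.range (L + 1), 0 ≤ P M) →
      ∑ M ∈ Finset.range (L + 1), P M = 1 →
      ((∀ M ∈ Finset.range (L + 1), 0 ≤ S P M) ∧ ∑ M ∈ Finset.range (L + 1), S P M = 1)) ∧
    -- `S(𝔟_{L,p}) = 𝔟_{L,q}`
    (∀ M ∈ Finset.range (L + 1), S (fun M' => binomPmf L p M') M = binomPmf L q M) := by
  have hbinom_le : ∀ M ∈ range (L + 1), ¬ (M : ℝ) < L * q → binomPmf L p M ≤ binomPmf L q M :=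
    fun M hM hLq => binomPmf_le_binomPmf (Nat.lt_succ_iff.1 (mem_range.1 hM)) hp0 hpq hq1
      (not_lt.1 hLq)
  have hr_pmf : IsPmfOn (range (L + 1)) r :=
    isPmfOn_weight (sum_binomPmf L p) (isPmfOn_binomPmf (hp0.trans hpq) hq1) hbinom_le hbnorm
      hbpos hr
  exact ⟨hr_pmf, fun _ hP₀ hP₁ => isPmfOn_transfer hr_pmf hS ⟨hP₀, hP₁⟩,
    fun _ hM => transfer_eq hbnorm hbpos.ne' hr hS hM⟩

/-- the map `r` is a pmf on `{0,…,L}`, the stochastic map `S`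
maps pmfs on `{0,…,L}` to pmfs on `{0,…,L}`, and `S(𝔟_{L,p}) = 𝔟_{L,q}`. -/
theorem stmt_5 (L : ℕ) (hL : 1 ≤ L) (p q : ℝ)
    (hp0 : 0 ≤ p) (hpq : p ≤ q) (hq1 : q ≤ 1)
    (bnorm : ℝ)
    (hbnorm : bnorm = ∑ M ∈ (Finset.range (L + 1)).filter (fun M : ℕ => (M : ℝ) < (L : ℝ) * q),
      binomPmf L p M)
    (hbpos : 0 < bnorm)
    (r : ℕ → ℝ)
    (hr : ∀ M, r M = if (M : ℝ) < (L : ℝ) * q then binomPmf L q M / bnorm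
      else (binomPmf L q M - binomPmf L p M) / bnorm)
    (S : (ℕ → ℝ) → (ℕ → ℝ))
    (hS : ∀ P M', S P M' = ∑ M ∈ Finset.range (L + 1),
      (if (M : ℝ) < (L : ℝ) * q then r M' else if M' = M then 1 else 0) * P M) :
    -- `r` is a pmf on `{0,…,L}` (in particular `r M ≥ 0`)
    ((∀ M ∈ Finset.range (L + 1), 0 ≤ r M) ∧ ∑ M ∈ Finset.range (L + 1), r M = 1) ∧
    -- `S` maps pmfs on `{0,…,L}` to pmfs on `{0,…,L}`
    (∀ P : ℕ → ℝ, (∀ M ∈ Finset.range (L + 1), 0 ≤ P M) →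
      ∑ M ∈ Finset.range (L + 1), P M = 1 →
      ((∀ M ∈ Finset.range (L + 1), 0 ≤ S P M) ∧ ∑ M ∈ Finset.range (L + 1), S P M = 1)) ∧
    -- `S(𝔟_{L,p}) = 𝔟_{L,q}`
    (∀ M ∈ Finset.range (L + 1), S (fun M' => binomPmf L p M') M = binomPmf L q M) :=
  stmt_5_general L p q hp0 hpq hq1 bnorm hbnorm hbpos r hr S hS
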